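/- Let H be a Hardy field containing ℒℰ and let f ∈ H be strongly non-polynomial with t^δ ≪ f(t) for some δ > 0. Then there exists c_0 ∈ (0,1) such that for every c ∈ (c_0, 1) there is a natural number k_0 with the function t ↦ t^c belonging to S(f, k_0). -/

import Mathlib

open Filter MeasureTheory Topology

noncomputable section

/-- `f ≺ g` : `f(t)/g(t) → 0` as `t → +∞`. -/
def Prec (f g : ℝ → ℝ) : Prop :=
  Filter.Tendsto (fun t => f t / g t) Filter.atTop (nhds 0)

/-- `f ≪ g` : `|f(t)| ≤ C |g(t)|` for some constant `C > 0` and all large `t`. -/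
def Dom (f g : ℝ → ℝ) : Prop :=
  ∃ C : ℝ, 0 < C ∧ ∀ᶠ t in Filter.atTop, |f t| ≤ C * |g t|

/-- `f` has polynomial growth: `f(t)/t^k → 0` for some positive integer `k`. -/
def PolyGrowth (f : ℝ → ℝ) : Prop :=
  ∃ k : ℕ, 0 < k ∧ Filter.Tendsto (fun t => f t / t ^ k) Filter.atTop (nhds 0)

/-- The logarithmico-exponential functions of Hardy: built from constants and the
identity by `+`, `-`, `*`, `/`, `exp`, `log` and composition. -/
inductive IsLE : (ℝ → ℝ) → Prop
  | const (c : ℝ) : IsLE fun _ => c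
  | id : IsLE fun t => t
  | add {f g} : IsLE f → IsLE g → IsLE (f + g)
  | sub {f g} : IsLE f → IsLE g → IsLE (f - g)
  | mul {f g} : IsLE f → IsLE g → IsLE (f * g)
  | div {f g} : IsLE f → IsLE g → IsLE (f / g)
  | exp {f} : IsLE f → IsLE fun t => Real.exp (f t)
  | log {f} : IsLE f → IsLE fun t => Real.log (f t)
  | comp {f g} : IsLE f → IsLE g → IsLE (f ∘ g)

/-- A Hardy field: a collection of (representatives of) germs at `+∞` of real functions,
closed under germ equality, forming a field under pointwise operations, and closed under
differentiation (each element is eventually differentiable, with derivative again in `H`). -/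
structure IsHardyField (H : Set (ℝ → ℝ)) : Prop where
  mem_congr : ∀ {f g : ℝ → ℝ}, f ∈ H → f =ᶠ[Filter.atTop] g → g ∈ H
  zero_mem : (fun _ : ℝ => (0 : ℝ)) ∈ H
  one_mem : (fun _ : ℝ => (1 : ℝ)) ∈ H
  add_mem : ∀ {f g : ℝ → ℝ}, f ∈ H → g ∈ H → f + g ∈ H
  neg_mem : ∀ {f : ℝ → ℝ}, f ∈ H → -f ∈ H
  mul_mem : ∀ {f g : ℝ → ℝ}, f ∈ H → g ∈ H → f * g ∈ H
  inv_mem : ∀ {f : ℝ → ℝ}, f ∈ H → ¬ (f =ᶠ[Filter.atTop] fun _ => (0 : ℝ)) →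
    (fun t => (f t)⁻¹) ∈ H
  eventuallyDifferentiable : ∀ {f : ℝ → ℝ}, f ∈ H →
    ∀ᶠ t in Filter.atTop, DifferentiableAt ℝ f t
  deriv_mem : ∀ {f : ℝ → ℝ}, f ∈ H → deriv f ∈ H

/-- `H` contains (the germs of) all logarithmico-exponential functions. -/
def ContainsLE (H : Set (ℝ → ℝ)) : Prop := ∀ f : ℝ → ℝ, IsLE f → f ∈ H

/-- strongly non-polynomial: `t^k ≺ f ≺ t^{k+1}` for some `k ∈ ℕ`, or `f(t) → 0`. -/
def StronglyNonPoly (f : ℝ → ℝ) : Prop :=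
  (∃ k : ℕ, Prec (fun t => t ^ k) f ∧ Prec f fun t => t ^ (k + 1)) ∨
    Filter.Tendsto f Filter.atTop (nhds 0)


/-- The class `S(f,k)`: all `g ∈ H` with `g(t) ≺ t`, such that the limit of
`g(t)·|f⁽ᵏ⁾(t)|^{1/k}` as `t → +∞` is nonzero (possibly `±∞`), and
`g(t) ≺ |f⁽ᵏ⁺¹⁾(t)|^{-1/(k+1)}`. -/
def SClass (H : Set (ℝ → ℝ)) (f : ℝ → ℝ) (k : ℕ) : Set (ℝ → ℝ) :=
  {g | g ∈ H ∧ Prec g (fun t => t) ∧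
    ((∃ c : ℝ, c ≠ 0 ∧ Filter.Tendsto
        (fun t => g t * |iteratedDeriv k f t| ^ ((k : ℝ)⁻¹)) Filter.atTop (nhds c)) ∨
      Filter.Tendsto (fun t => g t * |iteratedDeriv k f t| ^ ((k : ℝ)⁻¹))
        Filter.atTop Filter.atTop ∨
      Filter.Tendsto (fun t => g t * |iteratedDeriv k f t| ^ ((k : ℝ)⁻¹))
        Filter.atTop Filter.atBot) ∧
    Prec g fun t => |iteratedDeriv (k + 1) f t| ^ (-(1 : ℝ) / (k + 1))}

/-!
Since `f = O(t^m)` for some `m`, the eventual monotonicity of `|f⁽ʲ⁾|` in a Hardy field and the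
mean value theorem give `f⁽ʲ⁾ = O(t^(m-j))` for all `j`, so `t^(cj) f⁽ʲ⁾(t) → 0` for large `j`
when `c < 1`. On the other hand `t^c f'(t) ↛ 0` when `c > 1 - δ`, since integrating would give
`f = O(t^(1-c))`. Take `k₀` to be the last index before `t^(cj) f⁽ʲ⁾` starts to tend to `0`.
Then `t^c ≺ |f⁽ᵏ⁰⁺¹⁾|^(-1/(k₀+1))`, and `t^(ck₀) f⁽ᵏ⁰⁾` lies in `H`, so it has a limit in
`[-∞, ∞]`, which is nonzero by the choice of `k₀`.
-/

open Asymptotics Set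

theorem isBigO_rpow_atTop_iff {g : ℝ → ℝ} {m : ℝ} :
    (g =O[atTop] fun t => t ^ m) ↔ ∃ K > 0, ∀ᶠ t in atTop, |g t| ≤ K * t ^ m := by
  rw [isBigO_iff']
  refine exists_congr fun K => and_congr_right fun _ => eventually_congr ?_
  filter_upwards [eventually_ge_atTop 0] with t ht
  rw [Real.norm_eq_abs, Real.norm_of_nonneg (Real.rpow_nonneg ht m)]

theorem not_isBigO_rpow_rpow_atTop {r s : ℝ} (h : r < s) :
    ¬ (fun t : ℝ => t ^ s) =O[atTop] fun t => t ^ r := by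
  intro hO
  obtain ⟨K, -, hK⟩ := isBigO_rpow_atTop_iff.1 hO
  obtain ⟨t, htK, hlarge, ht0⟩ := (hK.and (((tendsto_rpow_atTop (sub_pos.2 h)).eventually_gt_atTop
    K).and (eventually_gt_atTop 0))).exists
  rw [abs_of_pos (Real.rpow_pos_of_pos ht0 s)] at htK
  have : K * t ^ r < t ^ s := by
    rw [← sub_add_cancel s r, Real.rpow_add ht0]
    exact mul_lt_mul_of_pos_right hlarge (Real.rpow_pos_of_pos ht0 r)
  linarith

theorem isBigO_rpow_sub_one_of_mul_id {g : ℝ → ℝ} {m : ℝ}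
    (h : (fun t => g t * t) =O[atTop] fun t => t ^ m) :
    g =O[atTop] fun t => t ^ (m - 1) := by
  refine (h.mul (isBigO_refl (fun t : ℝ => t⁻¹) atTop)).congr' ?_ ?_
  · filter_upwards [eventually_ne_atTop 0] with t ht
    field_simp
  · filter_upwards [eventually_gt_atTop 0] with t ht
    rw [Real.rpow_sub_one ht.ne', div_eq_mul_inv]

theorem StronglyNonPoly.exists_isBigO_rpow {f : ℝ → ℝ} (hf : StronglyNonPoly f) :
    ∃ m : ℝ, f =O[atTop] fun t => t ^ m := by
  rcases hf with ⟨k, -, hk⟩ | h0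
  · refine ⟨(k + 1 : ℕ), ?_⟩
    simp_rw [Real.rpow_natCast]
    refine isBigO_of_div_tendsto_nhds ?_ 0 hk
    filter_upwards [eventually_gt_atTop 0] with t ht h
    exact absurd h (pow_pos ht _).ne'
  · exact ⟨0, by simpa using h0.isBigO_one ℝ⟩

theorem rpow_mul_mul_rpow_inv {x y : ℝ} (hx : 0 ≤ x) (hy : 0 ≤ y) (c : ℝ) {p : ℝ} (hp : p ≠ 0) :
    (x ^ (c * p) * y) ^ p⁻¹ = x ^ c * y ^ p⁻¹ := by
  rw [Real.mul_rpow (Real.rpow_nonneg hx _) hy, ← Real.rpow_mul hx, mul_inv_cancel_right₀ hp]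

theorem prec_rpow_id {c : ℝ} (hc : c < 1) : Prec (fun t => t ^ c) fun t => t := by
  refine (tendsto_rpow_neg_atTop (sub_pos.2 hc)).congr' ?_
  filter_upwards [eventually_gt_atTop 0] with t ht
  rw [neg_sub, Real.rpow_sub ht, Real.rpow_one]

theorem prec_rpow_abs_rpow_of_tendsto {g : ℝ → ℝ} {c p : ℝ} (hp : 0 < p)
    (h : Tendsto (fun t => t ^ (c * p) * |g t|) atTop (𝓝 0)) :
    Prec (fun t => t ^ c) fun t => |g t| ^ (-1 / p) := by
  have hroot := h.rpow_const (p := p⁻¹) (Or.inr (inv_pos.2 hp).le)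
  rw [Real.zero_rpow (inv_pos.2 hp).ne'] at hroot
  refine hroot.congr' ?_
  filter_upwards [eventually_ge_atTop 0] with t ht
  rw [rpow_mul_mul_rpow_inv ht (abs_nonneg _) c hp.ne', neg_div, one_div,
    Real.rpow_neg (abs_nonneg _), div_inv_eq_mul]

theorem tendsto_atTop_or_nhds_of_monotoneOn_Ici {g : ℝ → ℝ} {T : ℝ}
    (hg : MonotoneOn g (Ici T)) : Tendsto g atTop atTop ∨ ∃ l, Tendsto g atTop (𝓝 l) := by
  have hmono : Monotone fun s => g (max s T) := fun a b hab =>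
    hg (le_max_right a T) (le_max_right b T) (max_le_max hab le_rfl)
  have heq : (fun s => g (max s T)) =ᶠ[atTop] g := by
    filter_upwards [eventually_ge_atTop T] with t ht
    rw [max_eq_left ht]
  exact (tendsto_atTop_of_monotone hmono).imp (·.congr' heq) fun ⟨l, hl⟩ => ⟨l, hl.congr' heq⟩

theorem exists_abs_deriv_mul_le {g : ℝ → ℝ} {a b : ℝ} (hab : a < b)
    (hd : ∀ t ∈ Icc a b, DifferentiableAt ℝ g t) :
    ∃ ξ ∈ Ioo a b, |deriv g ξ| * (b - a) ≤ |g a| + |g b| := by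
  obtain ⟨ξ, hξ, hslope⟩ := exists_deriv_eq_slope g hab
    (fun t ht => (hd t ht).continuousAt.continuousWithinAt)
    (fun t ht => (hd t (Ioo_subset_Icc_self ht)).differentiableWithinAt)
  refine ⟨ξ, hξ, ?_⟩
  rw [hslope, abs_div, abs_of_pos (sub_pos.2 hab), div_mul_cancel₀ _ (sub_pos.2 hab).ne']
  exact (abs_sub _ _).trans_eq (add_comm _ _)

theorem isBigO_rpow_of_deriv_isBigO {f : ℝ → ℝ} {a : ℝ} (ha : 0 < a)
    (hd : ∀ᶠ t in atTop, DifferentiableAt ℝ f t) (h : deriv f =O[atTop] fun t => t ^ (a - 1)) :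
    f =O[atTop] fun t => t ^ a := by
  obtain ⟨K, hK, hfK⟩ := isBigO_rpow_atTop_iff.1 h
  obtain ⟨T, hT⟩ := eventually_atTop.1 (hd.and hfK)
  set T₁ := max T 1
  have hB : ∀ s ∈ Ici T₁, HasDerivAt (fun s => |f T₁| + K / a * s ^ a)
      (K / a * (a * s ^ (a - 1))) s := fun s hs =>
    ((Real.hasDerivAt_rpow_const (Or.inl (by linarith [le_max_right T 1, mem_Ici.1 hs]))).const_mul
      _).const_add _
  refine isBigO_rpow_atTop_iff.2 ⟨|f T₁| + K / a, by positivity, ?_⟩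
  filter_upwards [eventually_ge_atTop T₁] with t ht
  have hfd : ∀ s ∈ Icc T₁ t, DifferentiableAt ℝ f s := fun s hs =>
    (hT s ((le_max_left T 1).trans hs.1)).1
  have hbound := image_norm_le_of_norm_deriv_right_le_deriv_boundary' (f := f) (f' := deriv f)
    (fun s hs => (hfd s hs).continuousAt.continuousWithinAt)
    (fun s hs => (hfd s (Ico_subset_Icc_self hs)).hasDerivAt.hasDerivWithinAt)
    (B := fun s => |f T₁| + K / a * s ^ a) (le_add_of_nonneg_right (by positivity))
    (fun s hs => (hB s hs.1).continuousAt.continuousWithinAt)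
    (fun s hs => (hB s hs.1).hasDerivWithinAt)
    (fun s hs => by
      rw [Real.norm_eq_abs, ← mul_assoc, div_mul_cancel₀ _ ha.ne']
      exact (hT s ((le_max_left T 1).trans hs.1)).2)
    ⟨ht, le_rfl⟩
  have h1 : 1 ≤ t ^ a := Real.one_le_rpow ((le_max_right T 1).trans ht) ha.le
  rw [Real.norm_eq_abs] at hbound
  nlinarith [abs_nonneg (f T₁)]

theorem not_tendsto_rpow_mul_abs_deriv {f : ℝ → ℝ} {c δ : ℝ} (hδc : 1 - c < δ) (hc : c < 1)
    (hd : ∀ᶠ t in atTop, DifferentiableAt ℝ f t) (hlow : (fun t => t ^ δ) =O[atTop] f) :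
    ¬ Tendsto (fun t => t ^ c * |deriv f t|) atTop (𝓝 0) := by
  intro h
  have hderiv : deriv f =O[atTop] fun t => t ^ ((1 - c) - 1) := by
    refine isBigO_rpow_atTop_iff.2 ⟨1, one_pos, ?_⟩
    filter_upwards [h.eventually (gt_mem_nhds one_pos), eventually_gt_atTop 0] with t ht ht0
    rw [sub_sub_cancel_left, Real.rpow_neg ht0.le, one_mul, ← one_div,
      le_div_iff₀' (Real.rpow_pos_of_pos ht0 c)]
    exact ht.le
  exact not_isBigO_rpow_rpow_atTop hδc
    (hlow.trans (isBigO_rpow_of_deriv_isBigO (sub_pos.2 hc) hd hderiv))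

namespace IsHardyField

variable {H : Set (ℝ → ℝ)} {g : ℝ → ℝ}

theorem iteratedDeriv_mem (hH : IsHardyField H) (hg : g ∈ H) (n : ℕ) :
    iteratedDeriv n g ∈ H := by
  induction n with
  | zero => rwa [iteratedDeriv_zero]
  | succ n ih => rw [iteratedDeriv_succ]; exact hH.deriv_mem ih

theorem rpow_mem (hH : IsHardyField H) (hLE : ContainsLE H) (c : ℝ) :
    (fun t : ℝ => t ^ c) ∈ H := by
  refine hH.mem_congr (hLE _ (IsLE.exp (IsLE.mul (IsLE.const c) (IsLE.log IsLE.id)))) ?_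
  filter_upwards [eventually_gt_atTop 0] with t ht
  rw [Real.rpow_def_of_pos ht, mul_comm]
  rfl

/-- `g * g⁻¹ ∈ H` is eventually continuous and takes only the values `0` and `1`, so by the
intermediate value theorem it cannot take both on `[t, ∞)` for large `t`. -/
theorem eventually_ne_zero (hH : IsHardyField H) (hg : g ∈ H)
    (hz : ¬ g =ᶠ[atTop] fun _ => 0) : ∀ᶠ t in atTop, g t ≠ 0 := by
  set e : ℝ → ℝ := g * fun t => (g t)⁻¹
  obtain ⟨T, hT⟩ := eventually_atTop.1
    (hH.eventuallyDifferentiable (hH.mul_mem hg (hH.inv_mem hg hz)))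
  filter_upwards [eventually_ge_atTop T] with t ht h0
  obtain ⟨s, hts, hs⟩ := frequently_atTop.1 (not_eventually.1 hz) t
  obtain ⟨x, -, hx⟩ : (1 / 2 : ℝ) ∈ e '' Icc t s :=
    intermediate_value_Icc hts (fun x hx => (hT x (ht.trans hx.1)).continuousAt.continuousWithinAt)
      ⟨by simp [h0], by norm_num [hs]⟩
  rcases eq_or_ne (g x) 0 with h | h <;> norm_num [e, h] at hx

theorem eventually_nonneg_or_nonpos (hH : IsHardyField H) (hg : g ∈ H) :
    (∀ᶠ t in atTop, 0 ≤ g t) ∨ ∀ᶠ t in atTop, g t ≤ 0 := by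
  by_cases hz : g =ᶠ[atTop] fun _ => 0
  · exact Or.inl (hz.mono fun t ht => ht.ge)
  obtain ⟨T, hT⟩ := eventually_atTop.1
    ((hH.eventually_ne_zero hg hz).and (hH.eventuallyDifferentiable hg))
  have hcont : ∀ t, ContinuousOn g (Icc T t) := fun t x hx =>
    (hT x hx.1).2.continuousAt.continuousWithinAt
  rcases le_or_gt 0 (g T) with hpos | hneg
  · refine Or.inl (eventually_atTop.2 ⟨T, fun t ht => ?_⟩)
    by_contra! hlt
    obtain ⟨x, hx, hx0⟩ := intermediate_value_Icc' ht (hcont t) ⟨hlt.le, hpos⟩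
    exact (hT x hx.1).1 hx0
  · refine Or.inr (eventually_atTop.2 ⟨T, fun t ht => ?_⟩)
    by_contra! hgt
    obtain ⟨x, hx, hx0⟩ := intermediate_value_Icc ht (hcont t) ⟨hneg.le, hgt.le⟩
    exact (hT x hx.1).1 hx0

theorem abs_mem (hH : IsHardyField H) (hg : g ∈ H) : (fun t => |g t|) ∈ H := by
  rcases hH.eventually_nonneg_or_nonpos hg with h | h
  · exact hH.mem_congr hg (h.mono fun t ht => (abs_of_nonneg ht).symm)
  · exact hH.mem_congr (hH.neg_mem hg) (h.mono fun t ht => (abs_of_nonpos ht).symm)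

theorem eventually_monotoneOn_or_antitoneOn (hH : IsHardyField H) (hg : g ∈ H) :
    ∃ T, MonotoneOn g (Ici T) ∨ AntitoneOn g (Ici T) := by
  have hreg : ∀ T, (∀ t ∈ Ici T, DifferentiableAt ℝ g t) →
      ContinuousOn g (Ici T) ∧ DifferentiableOn ℝ g (interior (Ici T)) := fun T hT =>
    ⟨fun t ht => (hT t ht).continuousAt.continuousWithinAt,
      fun t ht => (hT t (interior_subset ht)).differentiableWithinAt⟩
  rcases hH.eventually_nonneg_or_nonpos (hH.deriv_mem hg) with h | h <;>
    obtain ⟨T, hT⟩ := eventually_atTop.1 ((hH.eventuallyDifferentiable hg).and h) <;>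
    obtain ⟨hc, hd⟩ := hreg T fun t ht => (hT t ht).1
  · exact ⟨T, Or.inl (monotoneOn_of_deriv_nonneg (convex_Ici T) hc hd
      fun t ht => (hT t (interior_subset ht)).2)⟩
  · exact ⟨T, Or.inr (antitoneOn_of_deriv_nonpos (convex_Ici T) hc hd
      fun t ht => (hT t (interior_subset ht)).2)⟩

theorem tendsto_abs_atTop_or_nhds (hH : IsHardyField H) (hg : g ∈ H) :
    Tendsto (fun t => |g t|) atTop atTop ∨ ∃ l, Tendsto (fun t => |g t|) atTop (𝓝 l) := by
  obtain ⟨T, hmono | hanti⟩ := hH.eventually_monotoneOn_or_antitoneOn hg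
  · exact (tendsto_atTop_or_nhds_of_monotoneOn_Ici hmono).imp tendsto_abs_atTop_atTop.comp
      fun ⟨l, hl⟩ => ⟨|l|, hl.abs⟩
  · exact (tendsto_atTop_or_nhds_of_monotoneOn_Ici hanti.neg).imp
      (fun h => by simpa [Function.comp_def] using tendsto_abs_atTop_atTop.comp h)
      fun ⟨l, hl⟩ => ⟨|l|, by simpa using hl.abs⟩

/-- The mean value theorem on `[t, 2t]` or on `[t/2, t]`, depending on whether `|g'|` is
eventually increasing or decreasing. -/
theorem deriv_isBigO_rpow (hH : IsHardyField H) (hg : g ∈ H) {m : ℝ}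
    (h : g =O[atTop] fun t => t ^ m) : deriv g =O[atTop] fun t => t ^ (m - 1) := by
  obtain ⟨K, hK, hgK⟩ := isBigO_rpow_atTop_iff.1 h
  obtain ⟨T₁, hT₁⟩ := eventually_atTop.1
    (((hH.eventuallyDifferentiable hg).and hgK).and (eventually_gt_atTop 0))
  obtain ⟨T₂, hmono | hanti⟩ :=
    hH.eventually_monotoneOn_or_antitoneOn (hH.abs_mem (hH.deriv_mem hg))
  all_goals
    refine isBigO_rpow_sub_one_of_mul_id (isBigO_rpow_atTop_iff.2 ?_)
    have hpos : ∀ s, max T₁ T₂ ≤ s → 0 < s := fun s hs => (hT₁ s (le_of_max_le_left hs)).2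
  · refine ⟨K * (1 + 2 ^ m), by positivity, ?_⟩
    filter_upwards [eventually_ge_atTop (max T₁ T₂)] with t ht
    have ht0 := hpos t ht
    obtain ⟨ξ, hξ, hξle⟩ := exists_abs_deriv_mul_le (by linarith : t < 2 * t)
      fun x hx => (hT₁ x ((le_max_left _ _).trans (ht.trans hx.1))).1.1
    calc |deriv g t * t| = |deriv g t| * (2 * t - t) := by rw [abs_mul, abs_of_pos ht0]; ring
      _ ≤ |deriv g ξ| * (2 * t - t) := mul_le_mul_of_nonneg_right
          (hmono ((le_max_right _ _).trans ht) ((le_max_right _ _).trans (ht.trans hξ.1.le))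
            hξ.1.le) (by linarith)
      _ ≤ K * t ^ m + K * (2 * t) ^ m := hξle.trans (add_le_add
          (hT₁ t (le_of_max_le_left ht)).1.2 (hT₁ _ (by linarith [le_max_left T₁ T₂])).1.2)
      _ = K * (1 + 2 ^ m) * t ^ m := by rw [Real.mul_rpow zero_le_two ht0.le]; ring
  · refine ⟨2 * K * ((2 ^ m)⁻¹ + 1), by positivity, ?_⟩
    filter_upwards [eventually_ge_atTop (2 * max T₁ T₂)] with t ht
    have hhalf : max T₁ T₂ ≤ t / 2 := by linarith
    have ht0 : 0 < t := by linarith [hpos _ hhalf]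
    obtain ⟨ξ, hξ, hξle⟩ := exists_abs_deriv_mul_le (by linarith : t / 2 < t)
      fun x hx => (hT₁ x ((le_max_left _ _).trans (hhalf.trans hx.1))).1.1
    calc |deriv g t * t| = 2 * (|deriv g t| * (t - t / 2)) := by
          rw [abs_mul, abs_of_pos ht0]; ring
      _ ≤ 2 * (|deriv g ξ| * (t - t / 2)) := by
          refine mul_le_mul_of_nonneg_left (mul_le_mul_of_nonneg_right ?_ (by linarith)) zero_le_two
          exact hanti ((le_max_right _ _).trans (hhalf.trans hξ.1.le))
            ((le_max_right T₁ T₂).trans (by linarith)) hξ.2.le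
      _ ≤ 2 * (K * (t / 2) ^ m + K * t ^ m) := mul_le_mul_of_nonneg_left (hξle.trans
          (add_le_add (hT₁ _ ((le_max_left _ _).trans hhalf)).1.2
            (hT₁ t (by linarith [le_max_left T₁ T₂])).1.2)) zero_le_two
      _ = 2 * K * ((2 ^ m)⁻¹ + 1) * t ^ m := by
          rw [Real.div_rpow ht0.le zero_le_two]; ring

theorem iteratedDeriv_isBigO_rpow (hH : IsHardyField H) (hg : g ∈ H) {m : ℝ}
    (h : g =O[atTop] fun t => t ^ m) (j : ℕ) :
    iteratedDeriv j g =O[atTop] fun t => t ^ (m - j) := by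
  induction j with
  | zero => simpa using h
  | succ j ih =>
    rw [iteratedDeriv_succ, Nat.cast_succ, ← sub_sub]
    exact hH.deriv_isBigO_rpow (hH.iteratedDeriv_mem hg j) ih

theorem eventually_tendsto_rpow_mul_abs_iteratedDeriv (hH : IsHardyField H) (hg : g ∈ H)
    {m c : ℝ} (hc : c < 1) (h : g =O[atTop] fun t => t ^ m) :
    ∀ᶠ j : ℕ in atTop, Tendsto (fun t => t ^ (c * j) * |iteratedDeriv j g t|) atTop (𝓝 0) := by
  filter_upwards [eventually_gt_atTop ⌈m / (1 - c)⌉₊] with j hj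
  have hjm : m < j * (1 - c) :=
    (div_lt_iff₀ (sub_pos.2 hc)).1 ((Nat.le_ceil _).trans_lt (Nat.cast_lt.2 hj))
  have hO : (fun t => t ^ (c * j) * |iteratedDeriv j g t|) =O[atTop]
      fun t => t ^ (c * j) * t ^ (m - j) :=
    (isBigO_refl _ _).mul (hH.iteratedDeriv_isBigO_rpow hg h j).norm_left
  refine hO.trans_tendsto ((tendsto_rpow_neg_atTop (by linarith :
    0 < -(c * j + (m - j)))).congr' ?_)
  filter_upwards [eventually_gt_atTop 0] with t ht
  rw [neg_neg, Real.rpow_add ht]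

theorem tendsto_rpow_mul_abs_rpow_inv (hH : IsHardyField H) (hLE : ContainsLE H) (hg : g ∈ H)
    {c p : ℝ} (hp : 0 < p) (h : ¬ Tendsto (fun t => t ^ (c * p) * |g t|) atTop (𝓝 0)) :
    (∃ l, l ≠ 0 ∧ Tendsto (fun t => t ^ c * |g t| ^ p⁻¹) atTop (𝓝 l)) ∨
      Tendsto (fun t => t ^ c * |g t| ^ p⁻¹) atTop atTop := by
  have habs : (fun t => |t ^ (c * p) * g t|) =ᶠ[atTop] fun t => t ^ (c * p) * |g t| := by
    filter_upwards [eventually_ge_atTop 0] with t ht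
    rw [abs_mul, abs_of_nonneg (Real.rpow_nonneg ht _)]
  have hroot : (fun t => (t ^ (c * p) * |g t|) ^ p⁻¹) =ᶠ[atTop]
      fun t => t ^ c * |g t| ^ p⁻¹ := by
    filter_upwards [eventually_ge_atTop 0] with t ht
    exact rpow_mul_mul_rpow_inv ht (abs_nonneg _) c hp.ne'
  rcases hH.tendsto_abs_atTop_or_nhds (hH.mul_mem (hH.rpow_mem hLE (c * p)) hg) with htop | ⟨l, hl⟩
  · exact Or.inr (((tendsto_rpow_atTop (inv_pos.2 hp)).comp (htop.congr' habs)).congr' hroot)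
  · have hl' := hl.congr' habs
    have hl0 : 0 < l := lt_of_le_of_ne (ge_of_tendsto' hl fun t => abs_nonneg _)
      (by rintro rfl; exact h hl')
    exact Or.inl ⟨l ^ p⁻¹, (Real.rpow_pos_of_pos hl0 _).ne',
      (hl'.rpow_const (Or.inl hl0.ne')).congr' hroot⟩

end IsHardyField

/-- For `f` strongly non-polynomial in a Hardy field containing ℒℰ with
`t^δ ≪ f(t)` for some `δ > 0`, there is `c₀ ∈ (0,1)` such that for every `c ∈ (c₀,1)`
the function `t ↦ t^c` lies in `S(f,k₀)` for some `k₀`. -/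
theorem stmt_6 (H : Set (ℝ → ℝ)) (hH : IsHardyField H) (hLE : ContainsLE H)
    (f : ℝ → ℝ) (hf : f ∈ H) (hsnp : StronglyNonPoly f)
    (δ : ℝ) (hδ : 0 < δ) (hlow : Dom (fun t => t ^ δ) f) :
    ∃ c₀ : ℝ, 0 < c₀ ∧ c₀ < 1 ∧ ∀ c : ℝ, c₀ < c → c < 1 →
      ∃ k₀ : ℕ, (fun t : ℝ => t ^ c) ∈ SClass H f k₀ := by
  obtain ⟨m, hupper⟩ := hsnp.exists_isBigO_rpow
  have hlower : (fun t => t ^ δ) =O[atTop] f :=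
    let ⟨C, _, hC⟩ := hlow; isBigO_iff.2 ⟨C, hC⟩
  refine ⟨max (1 - δ) (1 / 2), lt_max_of_lt_right one_half_pos,
    max_lt (by linarith) one_half_lt_one, fun c hc hc1 => ?_⟩
  set Z : ℕ → Prop := fun j =>
    Tendsto (fun t => t ^ (c * j) * |iteratedDeriv j f t|) atTop (𝓝 0)
  have hZ1 : ¬ Z 1 := by
    simpa [Z] using not_tendsto_rpow_mul_abs_deriv (by linarith [le_max_left (1 - δ) (1 / 2)])
      hc1 (hH.eventuallyDifferentiable hf) hlower
  obtain ⟨J, hJ, hJ1⟩ := ((hH.eventually_tendsto_rpow_mul_abs_iteratedDeriv hf hc1 hupper).and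
    (eventually_ge_atTop 1)).exists
  obtain ⟨n, hn, hn1⟩ := Nat.exists_not_and_succ_of_not_zero_of_exists (p := fun n => Z (n + 1))
    hZ1 ⟨J - 1, by rwa [Nat.sub_add_cancel hJ1]⟩
  refine ⟨n + 1, hH.rpow_mem hLE c, prec_rpow_id hc1,
    (hH.tendsto_rpow_mul_abs_rpow_inv hLE (hH.iteratedDeriv_mem hf _) (by positivity) hn).imp_right
      Or.inl, prec_rpow_abs_rpow_of_tendsto (by positivity) ?_⟩
  simpa only [Z, Nat.cast_succ] using hn1
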